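/- arXiv:2209.13373 — 2 statements merged into one kernel-verified Lean document; each statement's English description precedes it below -/
import Mathlib

section
/- Let X be a subshift of finite type and f : X → X a cellular automaton that is von Neumann regular in End(X). Then the image f(X) is a subshift of finite type. -/
/-- The shift map on the full shift `A^ℤ`: `σ(x)_i = x_{i+1}`. -/
def shiftMap {A : Type*} (x : ℤ → A) : ℤ → A := fun i => x (i + 1)

/-- A cellular automaton on the full shift `A^ℤ` (with the product topology,
`A` discrete): a continuous map commuting with the shift. -/
def IsCA {A : Type*} [TopologicalSpace A] (f : (ℤ → A) → (ℤ → A)) : Prop :=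
  Continuous f ∧ ∀ x, f (shiftMap x) = shiftMap (f x)

/-- `f` is von Neumann regular in the monoid `End(A^ℤ)` of cellular automata:
there is a CA `h` with `f ∘ h ∘ f = f` and `h ∘ f ∘ h = h`. -/
def IsRegularCA {A : Type*} [TopologicalSpace A] (f : (ℤ → A) → (ℤ → A)) : Prop :=
  ∃ h : (ℤ → A) → (ℤ → A), IsCA h ∧ f ∘ h ∘ f = f ∧ h ∘ f ∘ h = h

/-- A subshift: a closed, shift-invariant subset of the full shift. -/
def IsSubshift {A : Type*} [TopologicalSpace A] (X : Set (ℤ → A)) : Prop :=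
  IsClosed X ∧ shiftMap '' X = X

/-- The finite word `w` occurs as a subword of the bi-infinite sequence `x`. -/
def occursIn {A : Type*} (w : List A) (x : ℤ → A) : Prop :=
  ∃ i : ℤ, ∀ k : Fin w.length, x (i + (k.val : ℤ)) = w.get k

/-- A subshift of finite type: the set of points avoiding a finite set `F` of
forbidden finite words. -/
def IsSFT {A : Type*} (X : Set (ℤ → A)) : Prop :=
  ∃ F : Set (List A), F.Finite ∧ X = {x | ∀ w ∈ F, ¬ occursIn w x}

/-- The language of a subshift: the finite words occurring in its points. -/
def lang {A : Type*} (X : Set (ℤ → A)) : Set (List A) :=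
  {w | ∃ x ∈ X, occursIn w x}

/-- `X` is mixing: for all words `u, v` in the language of `X` there is `N` such
that for every `n ≥ N` some word `u w v` with `|w| = n` is in the language. -/
def IsMixing {A : Type*} (X : Set (ℤ → A)) : Prop :=
  ∀ u ∈ lang X, ∀ v ∈ lang X, ∃ N : ℕ, ∀ n : ℕ, N ≤ n →
    ∃ w : List A, w.length = n ∧ (u ++ w ++ v) ∈ lang X

/-- A cellular automaton on the subshift `X`: a map `X → X` (presented as a map
of the ambient full shift restricted to `X`) that is continuous on `X` and
commutes with the shift on `X`. -/
def IsCAOn {A : Type*} [TopologicalSpace A] (X : Set (ℤ → A))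
    (f : (ℤ → A) → (ℤ → A)) : Prop :=
  Set.MapsTo f X X ∧ ContinuousOn f X ∧ ∀ x ∈ X, f (shiftMap x) = shiftMap (f x)

/-- `f` is von Neumann regular as an element of the monoid `End(X)` of cellular
automata on `X`: there is a CA `h` on `X` with `f∘h∘f = f` and `h∘f∘h = h` as
maps on `X`. -/
def IsRegularCAOn {A : Type*} [TopologicalSpace A] (X : Set (ℤ → A))
    (f : (ℤ → A) → (ℤ → A)) : Prop :=
  ∃ h : (ℤ → A) → (ℤ → A), IsCAOn X h ∧
    (∀ x ∈ X, f (h (f x)) = f x) ∧ (∀ x ∈ X, h (f (h x)) = h x)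

/-! If `h` is a weak inverse of `f` in `End(X)`, then `e = f ∘ h` is a cellular automaton on
`X`, and `f h f = f` gives `f(X) = {x ∈ X | e x = x}`. By compactness, `(e x)₀` depends only on
`x₋ᵣ … xᵣ` for some radius `r`, so the fixed points of `e` in `X` are cut out by forbidding,
besides the forbidden words of `X`, the finitely many words `z₋ᵣ … zᵣ` of points `z ∈ X` with
`(e z)₀ ≠ z₀`. -/

open Function

def shiftBy {A : Type*} (n : ℤ) (x : ℤ → A) : ℤ → A := fun i => x (i + n)

section Shift

variable {A : Type*}

@[simp]
lemma shiftBy_zero (x : ℤ → A) : shiftBy 0 x = x := by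
  funext i; simp [shiftBy]

lemma shiftMap_shiftBy (n : ℤ) (x : ℤ → A) : shiftMap (shiftBy n x) = shiftBy (n + 1) x := by
  funext i; exact congrArg x (by ring)

lemma shiftMap_injective : Injective (shiftMap : (ℤ → A) → ℤ → A) := fun x y hxy => by
  funext i; simpa [shiftMap] using congrFun hxy (i - 1)

lemma occursIn_shiftBy {w : List A} {x : ℤ → A} (n : ℤ) :
    occursIn w (shiftBy n x) ↔ occursIn w x := by
  constructor
  · rintro ⟨i, hi⟩
    exact ⟨i + n, fun k => by rw [← hi k, shiftBy, add_right_comm]⟩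
  · rintro ⟨i, hi⟩
    exact ⟨i - n, fun k => by rw [← hi k, shiftBy, sub_add_eq_add_sub, sub_add_cancel]⟩

end Shift

lemma IsSFT.shiftBy_mem {A : Type*} {X : Set (ℤ → A)} (hX : IsSFT X) (n : ℤ) {x : ℤ → A}
    (hx : x ∈ X) : shiftBy n x ∈ X := by
  obtain ⟨F, -, rfl⟩ := hX
  simpa only [Set.mem_ofPred_eq, occursIn_shiftBy] using hx

lemma isOpen_setOf_occursIn {A : Type*} [TopologicalSpace A] [DiscreteTopology A] (w : List A) :
    IsOpen {x : ℤ → A | occursIn w x} := by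
  simp only [occursIn, Set.ofPred_exists, Set.ofPred_forall]
  exact isOpen_iUnion fun i => isOpen_iInter_of_finite fun k =>
    (continuous_apply (A := fun _ : ℤ => A) (i + k)).isOpen_preimage {w.get k} (isOpen_discrete _)

lemma IsSFT.isClosed {A : Type*} [TopologicalSpace A] [DiscreteTopology A] {X : Set (ℤ → A)}
    (hX : IsSFT X) : IsClosed X := by
  obtain ⟨F, -, rfl⟩ := hX
  simp only [Set.ofPred_forall]
  exact isClosed_iInter fun w => isClosed_iInter fun _ => (isOpen_setOf_occursIn w).isClosed_compl

lemma IsCAOn.comp {A : Type*} [TopologicalSpace A] {X : Set (ℤ → A)} {f g : (ℤ → A) → ℤ → A}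
    (hf : IsCAOn X f) (hg : IsCAOn X g) : IsCAOn X (f ∘ g) :=
  ⟨hf.1.comp hg.1, hf.2.1.comp hg.2.1 hg.1, fun x hx => by
    simp only [comp_apply, hg.2.2 x hx, hf.2.2 _ (hg.1 hx)]⟩

lemma IsCAOn.map_shiftBy {A : Type*} [TopologicalSpace A] {X : Set (ℤ → A)}
    {e : (ℤ → A) → ℤ → A} (he : IsCAOn X e) (hX : ∀ n : ℤ, ∀ x ∈ X, shiftBy n x ∈ X) (n : ℤ)
    {x : ℤ → A} (hx : x ∈ X) : e (shiftBy n x) = shiftBy n (e x) := by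
  induction n using Int.induction_on with
  | zero => simp
  | succ n ih => rw [← shiftMap_shiftBy, ← shiftMap_shiftBy, he.2.2 _ (hX n x hx), ih]
  | pred n ih =>
    apply shiftMap_injective
    rw [← he.2.2 _ (hX _ x hx), shiftMap_shiftBy, shiftMap_shiftBy, sub_add_cancel, ih]

theorem IsCompact.exists_finset_apply_eq_of_eqOn {ι A B : Type*} [TopologicalSpace A]
    [T2Space A] [TopologicalSpace B] [DiscreteTopology B] {K : Set (ι → A)} (hK : IsCompact K)
    {φ : (ι → A) → B} (hφ : ContinuousOn φ K) :
    ∃ S : Finset ι, ∀ x ∈ K, ∀ y ∈ K, Set.EqOn x y S → φ x = φ y := by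
  classical
  set s := K ×ˢ K ∩ (fun p : (ι → A) × (ι → A) => (φ p.1, φ p.2)) ⁻¹' {q | q.1 ≠ q.2}
  have hs : IsCompact s := by
    refine (hK.prod hK).of_isClosed_subset ?_ Set.inter_subset_left
    refine ContinuousOn.preimage_isClosed_of_isClosed ?_ (hK.isClosed.prod hK.isClosed)
      (isClosed_discrete _)
    exact (hφ.comp continuousOn_fst fun p hp => hp.1).prodMk
      (hφ.comp continuousOn_snd fun p hp => hp.2)
  set agree : Finset ι → Set ((ι → A) × (ι → A)) := fun S => {p | Set.EqOn p.1 p.2 S}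
  have hclosed : ∀ S, IsClosed (agree S) := fun S => by
    simp only [agree, Set.EqOn, Set.ofPred_forall]
    exact isClosed_iInter fun i => isClosed_iInter fun _ =>
      isClosed_eq ((continuous_apply i).comp continuous_fst)
        ((continuous_apply i).comp continuous_snd)
  have hempty : s ∩ ⋂ S, agree S = ∅ := by
    refine Set.eq_empty_of_forall_notMem fun p ⟨⟨_, hne⟩, hp⟩ => hne ?_
    have : p.1 = p.2 := funext fun i => Set.mem_iInter.1 hp {i} (Finset.mem_singleton_self i)
    simp [this]
  have hdir : Directed (· ⊇ ·) agree := fun S T =>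
    ⟨S ∪ T, fun _ hp => hp.mono (by simp), fun _ hp => hp.mono (by simp)⟩
  obtain ⟨S, hS⟩ := hs.elim_directed_family_closed agree hclosed hempty hdir
  refine ⟨S, fun x hx y hy hxy => of_not_not fun hne => ?_⟩
  exact (Set.eq_empty_iff_forall_notMem.1 hS) (x, y) ⟨⟨⟨hx, hy⟩, hne⟩, hxy⟩

lemma occursIn_ofFn {A : Type*} {m : ℕ} {g : Fin m → A} {x : ℤ → A} :
    occursIn (List.ofFn g) x ↔ ∃ i : ℤ, ∀ k : Fin m, x (i + k) = g k := by
  simp only [occursIn, List.get_ofFn]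
  exact exists_congr fun i => (finCongr List.length_ofFn).forall_congr fun k => by simp

def centeredWord {A : Type*} (r : ℕ) (x : ℤ → A) : List A :=
  List.ofFn fun k : Fin (2 * r + 1) => x (k - r)

section CenteredWord

variable {A : Type*} {r : ℕ}

lemma occursIn_centeredWord_iff {x z : ℤ → A} :
    occursIn (centeredWord r z) x ↔ ∃ n : ℤ, centeredWord r (shiftBy n x) = centeredWord r z := by
  simp only [centeredWord, occursIn_ofFn, List.ofFn_inj, funext_iff, shiftBy]
  constructor
  · rintro ⟨i, hi⟩
    exact ⟨i + r, fun k => by rw [← hi k]; congr 1; ring⟩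
  · rintro ⟨n, hn⟩
    exact ⟨n - r, fun k => by rw [← hn k]; congr 1; ring⟩

lemma eqOn_of_centeredWord_eq {x y : ℤ → A} (h : centeredWord r x = centeredWord r y) :
    Set.EqOn x y (Finset.Icc (-r : ℤ) r) := by
  intro j hj
  simp only [Finset.coe_Icc, Set.mem_Icc] at hj
  have := congrFun (List.ofFn_inj.1 h) ⟨(j + r).toNat, by omega⟩
  rwa [Int.toNat_of_nonneg (by omega), add_sub_cancel_right] at this

lemma finite_range_centeredWord [Finite A] : (Set.range (centeredWord (A := A) r)).Finite :=
  (Set.finite_range (List.ofFn : (Fin (2 * r + 1) → A) → List A)).subset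
    (Set.range_subset_iff.2 fun _ => ⟨_, rfl⟩)

end CenteredWord

lemma Int.exists_finset_subset_Icc (S : Finset ℤ) : ∃ r : ℕ, S ⊆ Finset.Icc (-r : ℤ) r :=
  ⟨S.sup Int.natAbs, fun j hj => by
    have := Finset.le_sup (f := Int.natAbs) hj
    rw [Finset.mem_Icc]
    omega⟩

lemma IsCAOn.exists_radius {A : Type*} [Finite A] [TopologicalSpace A] [DiscreteTopology A]
    {X : Set (ℤ → A)} (hX : IsClosed X) {e : (ℤ → A) → ℤ → A} (he : IsCAOn X e) :
    ∃ r : ℕ, ∀ x ∈ X, ∀ y ∈ X, centeredWord r x = centeredWord r y → e x 0 = e y 0 := by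
  obtain ⟨S, hS⟩ := hX.isCompact.exists_finset_apply_eq_of_eqOn
    ((continuous_apply 0).comp_continuousOn he.2.1)
  obtain ⟨r, hr⟩ := Int.exists_finset_subset_Icc S
  exact ⟨r, fun x hx y hy hxy =>
    hS x hx y hy ((eqOn_of_centeredWord_eq hxy).mono (Finset.coe_subset.2 hr))⟩

theorem IsSFT.inter_fixedPoints {A : Type*} [Finite A] [TopologicalSpace A] [DiscreteTopology A]
    {X : Set (ℤ → A)} (hX : IsSFT X) {e : (ℤ → A) → ℤ → A} (he : IsCAOn X e) :
    IsSFT (X ∩ fixedPoints e) := by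
  obtain ⟨r, hlocal⟩ := he.exists_radius hX.isClosed
  have hshift : ∀ n, ∀ x ∈ X, e x n = e (shiftBy n x) 0 := fun n x hx => by
    rw [he.map_shiftBy (fun n _ => hX.shiftBy_mem n) n hx, shiftBy, zero_add]
  obtain ⟨F, hF, hXF⟩ := id hX
  refine ⟨F ∪ centeredWord r '' {z ∈ X | e z 0 ≠ z 0},
    hF.union (finite_range_centeredWord.subset (Set.image_subset_range _ _)), ?_⟩
  ext x
  simp only [Set.mem_inter_iff, mem_fixedPoints, IsFixedPt, Set.mem_ofPred_eq, Set.mem_union]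
  constructor
  · rintro ⟨hxX, hex⟩ w (hw | ⟨z, ⟨hzX, hz⟩, rfl⟩) hocc
    · rw [hXF] at hxX
      exact hxX w hw hocc
    · obtain ⟨n, hn⟩ := occursIn_centeredWord_iff.1 hocc
      have hz0 := eqOn_of_centeredWord_eq hn (by simp : (0 : ℤ) ∈ Finset.Icc (-r : ℤ) r)
      apply hz
      rw [← hlocal _ (hX.shiftBy_mem n hxX) z hzX hn, ← hshift n x hxX, hex, ← hz0, shiftBy,
        zero_add]
  · intro hx
    have hxX : x ∈ X := hXF ▸ fun w hw => hx w (Or.inl hw)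
    refine ⟨hxX, funext fun n => ?_⟩
    rw [hshift n x hxX]
    by_contra hne
    exact hx _ (Or.inr ⟨shiftBy n x, ⟨hX.shiftBy_mem n hxX, by rwa [shiftBy, zero_add]⟩, rfl⟩)
      (occursIn_centeredWord_iff.2 ⟨n, rfl⟩)

lemma image_eq_inter_fixedPoints {α : Type*} {X : Set α} {f h : α → α} (hh : Set.MapsTo h X X)
    (hf : Set.MapsTo f X X) (hfhf : ∀ x ∈ X, f (h (f x)) = f x) :
    f '' X = X ∩ fixedPoints (f ∘ h) := by
  ext x
  constructor
  · rintro ⟨y, hy, rfl⟩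
    exact ⟨hf hy, hfhf y hy⟩
  · rintro ⟨hx, hfix⟩
    exact ⟨h x, hh hx, hfix⟩

theorem stmt7_general {A : Type*} [Finite A] [TopologicalSpace A] [DiscreteTopology A]
    (X : Set (ℤ → A)) (hXsft : IsSFT X)
    (f : (ℤ → A) → (ℤ → A)) (hf : IsCAOn X f)
    (hreg : IsRegularCAOn X f) :
    IsSFT (f '' X) := by
  obtain ⟨h, hh, hfhf, -⟩ := hreg
  rw [image_eq_inter_fixedPoints hh.1 hf.1 hfhf]
  exact hXsft.inter_fixedPoints (hf.comp hh)

/-- If `X` is an SFT and `f : X → X` is a cellular automaton that is von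
Neumann regular in `End(X)`, then the image `f(X)` is an SFT. -/
theorem stmt7 {A : Type*} [Finite A] [TopologicalSpace A] [DiscreteTopology A]
    (X : Set (ℤ → A)) (hX : IsSubshift X) (hXsft : IsSFT X)
    (f : (ℤ → A) → (ℤ → A)) (hf : IsCAOn X f)
    (hreg : IsRegularCAOn X f) :
    IsSFT (f '' X) :=
  stmt7_general X hXsft f hf hreg
end

section
/- The elementary cellular automaton with Wolfram number 27, i.e. the CA f on {0,1}^ℤ with f(x)_i = 1 if and only if (x_{i-1}, x_i, x_{i+1}) ∈ {(0,0,0), (0,0,1), (0,1,1), (1,0,0)}, is not von Neumann regular in End({0,1}^ℤ). -/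
/-!
Let `y = ⋯0 0 1 1 0 0⋯` (ones at positions `0` and `1`) and suppose `f ∘ h ∘ f = f` for a CA `h`.
Rule 27 sends `1^∞` to `0^∞`, so `f (h 0^∞) = 0^∞`; as `h 0^∞` is shift-invariant it is constant,
and since rule 27 negates constant configurations, `h 0^∞ = 1^∞`. The configuration `y` lies in the
image of `f`, so `h y` is a preimage of `y`, and every preimage of `y` alternates `0 1 0 1 ⋯` to the
right of position `1`. But `y` is eventually `0` to the right, so by continuity and
shift-commutation `h y` is eventually `1` to the right: a contradiction.
-/

open Filter Topology

/-- Wolfram's numbering: the neighbourhood `a b c` is sent to bit `4a + 2b + c` of `r`. -/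
def wolfram (r : ℕ) (a b c : Bool) : Bool :=
  r.testBit (4 * a.toNat + 2 * b.toNat + c.toNat)

def elementaryCA (r : ℕ) (x : ℤ → Bool) : ℤ → Bool :=
  fun i => wolfram r (x (i - 1)) (x i) (x (i + 1))

theorem elementaryCA_const (r : ℕ) (b : Bool) :
    elementaryCA r (fun _ => b) = fun _ => wolfram r b b b :=
  rfl

section Shift

variable {A : Type*}

theorem shiftMap_iterate_apply (x : ℤ → A) (n : ℕ) (i : ℤ) :
    shiftMap^[n] x i = x (i + n) := by
  induction n generalizing x with
  | zero => simp
  | succ n ih =>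
    rw [Function.iterate_succ_apply, ih, shiftMap]
    push_cast
    ring_nf

theorem eq_const_of_shiftMap_eq {x : ℤ → A} (hx : shiftMap x = x) : x = fun _ => x 0 := by
  have step (i : ℤ) : x (i + 1) = x i := congrFun hx i
  funext i
  induction i using Int.induction_on with
  | zero => rfl
  | succ i ih => rw [step, ih]
  | pred i ih => rw [← ih, ← step, sub_add_cancel]

theorem tendsto_shiftMap_iterate_of_eventually_eq [TopologicalSpace A] {x : ℤ → A} {a : A}
    (hx : ∀ᶠ i in atTop, x i = a) :
    Tendsto (fun n : ℕ => shiftMap^[n] x) atTop (𝓝 fun _ => a) := by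
  refine tendsto_pi_nhds.2 fun i => tendsto_nhds_of_eventually_eq ?_
  obtain ⟨N, hN⟩ := eventually_atTop.1 hx
  filter_upwards [eventually_ge_atTop (N - i).toNat] with n hn
  rw [shiftMap_iterate_apply]
  exact hN _ (by omega)

variable [TopologicalSpace A] {h : (ℤ → A) → (ℤ → A)}

theorem IsCA.apply_const (hh : IsCA h) (a : A) :
    h (fun _ => a) = fun _ => h (fun _ => a) 0 :=
  eq_const_of_shiftMap_eq ((hh.2 fun _ => a).symm)

theorem IsCA.iterate_shiftMap (hh : IsCA h) (n : ℕ) (x : ℤ → A) :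
    h (shiftMap^[n] x) = shiftMap^[n] (h x) :=
  (Function.Commute.iterate_right (f := h) hh.2 n) x

theorem IsCA.eventually_apply_eq [DiscreteTopology A] (hh : IsCA h) {x : ℤ → A} {a : A}
    (hx : ∀ᶠ i in atTop, x i = a) :
    ∀ᶠ n : ℕ in atTop, h x n = h (fun _ => a) 0 := by
  have hlim := ((continuous_apply 0).comp hh.1).tendsto _ |>.comp
    (tendsto_shiftMap_iterate_of_eventually_eq hx)
  rw [nhds_discrete, tendsto_pure] at hlim
  filter_upwards [hlim] with n hn
  simpa [hh.iterate_shiftMap, shiftMap_iterate_apply] using hn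

end Shift

theorem eq_elementaryCA_27 {f : (ℤ → Bool) → (ℤ → Bool)}
    (hf : ∀ (x : ℤ → Bool) (i : ℤ), f x i = true ↔
      (x (i - 1), x i, x (i + 1)) = (false, false, false) ∨
      (x (i - 1), x i, x (i + 1)) = (false, false, true) ∨
      (x (i - 1), x i, x (i + 1)) = (false, true, true) ∨
      (x (i - 1), x i, x (i + 1)) = (true, false, false)) :
    f = elementaryCA 27 := by
  funext x i
  rw [Bool.eq_iff_iff, hf, elementaryCA]
  generalize x (i - 1) = a; generalize x i = b; generalize x (i + 1) = c
  revert a b c; decide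

theorem wolfram_27_self (b : Bool) : wolfram 27 b b b = !b := by
  revert b; decide

theorem wolfram_27_false_eq_false {b c : Bool} (h : wolfram 27 false b c = false) :
    b = true ∧ c = false := by
  revert b c; decide

theorem wolfram_27_eq_false_of_outputs {a b c d e : Bool} (habc : wolfram 27 a b c = false)
    (hbcd : wolfram 27 b c d = true) (hcde : wolfram 27 c d e = true) : d = false := by
  revert a b c d e; decide

def twoOnes : ℤ → Bool := fun i => decide (i = 0 ∨ i = 1)

def twoOnesPreimage : ℤ → Bool := fun i => decide (i < 0 ∨ (2 ≤ i ∧ i % 2 = 0))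

theorem elementaryCA_27_twoOnesPreimage : elementaryCA 27 twoOnesPreimage = twoOnes := by
  funext i
  obtain h | rfl | rfl | rfl | ⟨h, he⟩ | ⟨h, ho⟩ : i ≤ -2 ∨ i = -1 ∨ i = 0 ∨ i = 1 ∨
      (2 ≤ i ∧ i % 2 = 0) ∨ (2 ≤ i ∧ i % 2 = 1) := by omega
  all_goals simp only [elementaryCA, twoOnesPreimage, twoOnes]
  · rw [decide_eq_true (by omega), decide_eq_true (by omega), decide_eq_true (by omega),
      decide_eq_false (by omega)]; rfl
  · rfl
  · rfl
  · rfl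
  · rw [decide_eq_false (by omega), decide_eq_true (by omega), decide_eq_false (by omega),
      decide_eq_false (by omega)]; rfl
  · rw [decide_eq_true (by omega), decide_eq_false (by omega), decide_eq_true (by omega),
      decide_eq_false (by omega)]; rfl

/-- The outputs at `-1, 0, 1` force `x 1 = 0`; then each output `0` at an even position `≥ 2`
forces the next two cells to be `1 0`. -/
theorem elementaryCA_27_eq_twoOnes {x : ℤ → Bool} (hx : elementaryCA 27 x = twoOnes) (n : ℕ) :
    x (2 * n + 1) = false := by
  have out (i : ℤ) : wolfram 27 (x (i - 1)) (x i) (x (i + 1)) = twoOnes i := congrFun hx i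
  induction n with
  | zero =>
    have hm := out (-1); have h₀ := out 0; have h₁ := out 1
    norm_num [twoOnes] at hm h₀ h₁
    simpa using wolfram_27_eq_false_of_outputs hm h₀ h₁
  | succ n ih =>
    have h := out (2 * n + 2)
    rw [show (2 * n + 2 : ℤ) - 1 = 2 * n + 1 by ring, ih,
      show (2 * n + 2 : ℤ) + 1 = 2 * (n + 1 : ℕ) + 1 by push_cast; ring] at h
    exact (wolfram_27_false_eq_false (h.trans (by simp [twoOnes]; omega))).2

/-- The elementary cellular automaton with Wolfram number 27 is not von
Neumann regular in End({0,1}^ℤ). Here 1 is represented by `true`. -/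
theorem stmt11 (f : (ℤ → Bool) → (ℤ → Bool))
    (hf : ∀ (x : ℤ → Bool) (i : ℤ), f x i = true ↔
      (x (i - 1), x i, x (i + 1)) = (false, false, false) ∨
      (x (i - 1), x i, x (i + 1)) = (false, false, true) ∨
      (x (i - 1), x i, x (i + 1)) = (false, true, true) ∨
      (x (i - 1), x i, x (i + 1)) = (true, false, false)) :
    ¬ IsRegularCA f := by
  obtain rfl := eq_elementaryCA_27 hf
  rintro ⟨h, hh, hfhf, -⟩
  have hzero : h (fun _ => false) 0 = true := by
    have := congrFun (congrFun hfhf fun _ => true) 0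
    simp only [Function.comp_apply, elementaryCA_const, wolfram_27_self, Bool.not_true] at this
    rw [hh.apply_const, elementaryCA_const, wolfram_27_self] at this
    simpa using this
  have hpre : elementaryCA 27 (h twoOnes) = twoOnes := by
    simpa only [Function.comp_apply, elementaryCA_27_twoOnesPreimage] using
      congrFun hfhf twoOnesPreimage
  have hright : ∀ᶠ i in atTop, twoOnes i = false :=
    eventually_atTop.2 ⟨2, fun i hi => by simp [twoOnes]; omega⟩
  obtain ⟨N, hN⟩ := eventually_atTop.1 (hh.eventually_apply_eq hright)
  have := hN (2 * N + 1) (by omega)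
  push_cast at this
  rw [hzero, elementaryCA_27_eq_twoOnes hpre N] at this
  exact Bool.false_ne_true this
end
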